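/- arXiv:1506.08002 — 5 statements merged into one kernel-verified Lean document; each statement's English description precedes it below -/
import Mathlib

section
/- Let θ* be the optimum of the LASSO dual problem, which is feasible, i.e., |x_j^⊤ θ*| ≤ 1 for all j. If U_j ∈ ℝ satisfies U_j ≥ |x_j^⊤ θ*| and U_j < 1, then the primal optimal coefficient β*_j equals 0. -/
open Finset

noncomputable def lassoObj {n D : ℕ} (X : Matrix (Fin n) (Fin D) ℝ)
    (y : Fin n → ℝ) (lam : ℝ) (β : Fin D → ℝ) : ℝ :=
  (1/2) * ∑ i, (y i - ∑ j, X i j * β j) ^ 2 + lam * ∑ j, |β j|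

/-- Safe screening via upper bound: if `U_j ≥ |x_j^⊤ θ*|` (with `θ*` the dual
optimum `(y - Xβ*)/λ`) and `U_j < 1`, then `β*_j = 0`. -/
theorem stmt_2 {n D : ℕ} (X : Matrix (Fin n) (Fin D) ℝ) (y : Fin n → ℝ)
    (lam : ℝ) (hlam : 0 < lam) (βs : Fin D → ℝ)
    (hopt : ∀ β : Fin D → ℝ, lassoObj X y lam βs ≤ lassoObj X y lam β)
    (θs : Fin n → ℝ)
    (hθ : θs = fun i => (y i - ∑ j, X i j * βs j) / lam)
    (hfeas : ∀ j : Fin D, |∑ i, X i j * θs i| ≤ 1)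
    (j : Fin D) (U : ℝ)
    (hU : |∑ i, X i j * θs i| ≤ U) (hU1 : U < 1) :
    βs j = 0 := by
  by_contra hne
  subst hθ
  -- residual inner product
  set A : ℝ := ∑ i, X i j * ((y i - ∑ j', X i j' * βs j') / lam) with hA
  have hAr : ∑ i, X i j * (y i - ∑ j', X i j' * βs j') = lam * A := by
    rw [hA, Finset.mul_sum]
    refine Finset.sum_congr rfl fun i _ => ?_
    field_simp
  set Q : ℝ := ∑ i, (X i j)^2 with hQ
  have hQ0 : 0 ≤ Q := Finset.sum_nonneg fun i _ => sq_nonneg _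
  have habs : 0 < |βs j| := abs_pos.mpr hne
  set s : ℝ := if 0 < βs j then 1 else -1 with hsdef
  have hs1 : s * s = 1 := by by_cases h : 0 < βs j <;> simp [hsdef, h]
  have hs2 : s * βs j = |βs j| := by
    by_cases h : 0 < βs j
    · simp [hsdef, h, abs_of_pos h]
    · push_neg at h
      simp [hsdef, not_lt.mpr h, abs_of_nonpos h]
  have hsabs : |s| = 1 := by by_cases h : 0 < βs j <;> simp [hsdef, h]
  set t : ℝ := min |βs j| (lam * (1 - U) / (Q + 1)) with ht
  have hlU : 0 < lam * (1 - U) := mul_pos hlam (by linarith)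
  have htpos : 0 < t := lt_min habs (div_pos hlU (by linarith))
  have htle : t ≤ |βs j| := min_le_left _ _
  have htQ : t * Q < lam * (1 - U) := by
    have h1 : t * Q ≤ lam * (1 - U) / (Q + 1) * Q :=
      mul_le_mul_of_nonneg_right (min_le_right _ _) hQ0
    have h2 : lam * (1 - U) / (Q + 1) * Q < lam * (1 - U) := by
      rw [div_mul_eq_mul_div, div_lt_iff₀ (by linarith)]
      nlinarith
    linarith
  set β' : Fin D → ℝ := Function.update βs j (βs j - t * s) with hβ'
  -- sum identities
  have hβ'sum : ∀ i, ∑ j', X i j' * β' j'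
      = (∑ j', X i j' * βs j') - t * s * X i j := by
    intro i
    have h1 : ∀ j', X i j' * β' j'
        = X i j' * βs j' + (if j' = j then -(t * s * X i j) else 0) := by
      intro j'
      by_cases hj : j' = j
      · subst hj; simp [hβ', Function.update]; ring
      · simp [hβ', Function.update, hj]
    rw [Finset.sum_congr rfl fun j' _ => h1 j', Finset.sum_add_distrib,
      Finset.sum_ite_eq' Finset.univ j (fun _ => -(t * s * X i j))]
    simp; ring
  have habs' : |βs j - t * s| = |βs j| - t := by
    have hβj : βs j = s * |βs j| := by
      have := congrArg (fun x => s * x) hs2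
      calc βs j = (s * s) * βs j := by rw [hs1]; ring
        _ = s * |βs j| := by rw [mul_assoc, hs2]
    have : βs j - t * s = s * (|βs j| - t) := by
      linear_combination s * hs2 - βs j * hs1
    rw [this, abs_mul, hsabs, one_mul, abs_of_nonneg (by linarith)]
  have hpen : ∑ j', |β' j'| = (∑ j', |βs j'|) - t := by
    have h1 : ∀ j', |β' j'| = |βs j'| + (if j' = j then -t else 0) := by
      intro j'
      by_cases hj : j' = j
      · subst hj; simp [hβ', Function.update, habs']; ring
      · simp [hβ', Function.update, hj]
    rw [Finset.sum_congr rfl fun j' _ => h1 j', Finset.sum_add_distrib,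
      Finset.sum_ite_eq' Finset.univ j (fun _ => -t)]
    simp; ring
  have hquad : ∑ i, (y i - ∑ j', X i j' * β' j')^2
      = (∑ i, (y i - ∑ j', X i j' * βs j')^2)
        + 2 * t * s * (∑ i, X i j * (y i - ∑ j', X i j' * βs j'))
        + t^2 * Q := by
    have h1 : ∀ i, (y i - ∑ j', X i j' * β' j')^2
        = (y i - ∑ j', X i j' * βs j')^2
          + 2 * t * s * (X i j * (y i - ∑ j', X i j' * βs j'))
          + t^2 * (X i j)^2 := by
      intro i
      rw [hβ'sum i]
      linear_combination (t^2 * (X i j)^2) * hs1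
    rw [Finset.sum_congr rfl fun i _ => h1 i, Finset.sum_add_distrib,
      Finset.sum_add_distrib, ← Finset.mul_sum, ← Finset.mul_sum, hQ]
  have hobj : lassoObj X y lam β'
      = lassoObj X y lam βs + (t * s * (lam * A) + t^2 * Q / 2 - lam * t) := by
    unfold lassoObj
    rw [hquad, hpen, hAr]
    ring
  have hge := hopt β'
  rw [hobj] at hge
  have hkey : t * s * (lam * A) ≤ t * (lam * U) := by
    have h1 : s * A ≤ |A| := by
      calc s * A ≤ |s * A| := le_abs_self _
        _ = |A| := by rw [abs_mul, hsabs, one_mul]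
    have h3 : s * A ≤ U := le_trans h1 hU
    calc t * s * (lam * A) = (t * lam) * (s * A) := by ring
      _ ≤ (t * lam) * U := by
          exact mul_le_mul_of_nonneg_left h3 (by positivity)
      _ = t * (lam * U) := by ring
  nlinarith [htpos, htQ, mul_pos htpos hlU]
end

section
/- Suppose all entries of all feature vectors are in [0,1] and for indices j, j′ we have 0 ≤ x^i_{j′} ≤ x^i_j for all i ∈ {1,…,n} (j′ a descendant interaction feature of j). Then for any y ∈ ℝ^n, |x_{j′}^⊤ y| ≤ max{ |Σ_{i: y_i > 0} x^i_j y_i|, |Σ_{i: y_i < 0} x^i_j y_i| }. -/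
open Finset

/-- Anti-monotonicity bound used to compute `λ_max` by tree pruning:
if `0 ≤ x' ≤ x` componentwise with entries in `[0,1]`, then
`|x'^⊤ y| ≤ max{|Σ_{y_i>0} x_i y_i|, |Σ_{y_i<0} x_i y_i|}`. -/
theorem stmt_3 {n : ℕ} (x x' : Fin n → ℝ)
    (hx : ∀ i, x i ∈ Set.Icc (0:ℝ) 1) (hx' : ∀ i, x' i ∈ Set.Icc (0:ℝ) 1)
    (hdom : ∀ i, 0 ≤ x' i ∧ x' i ≤ x i) (y : Fin n → ℝ) :
    |∑ i, x' i * y i| ≤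
      max |∑ i ∈ Finset.univ.filter (fun i => 0 < y i), x i * y i|
          |∑ i ∈ Finset.univ.filter (fun i => y i < 0), x i * y i| := by
  set Sp := Finset.univ.filter (fun i : Fin n => 0 < y i) with hSp
  set Sn := Finset.univ.filter (fun i : Fin n => y i < 0) with hSn
  set P := ∑ i ∈ Sp, x' i * y i with hP
  set N := ∑ i ∈ Sn, x' i * y i with hN
  set Pb := ∑ i ∈ Sp, x i * y i with hPb
  set Nb := ∑ i ∈ Sn, x i * y i with hNb
  have hPnn : 0 ≤ P := Finset.sum_nonneg fun i hi => by
    have := (Finset.mem_filter.mp hi).2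
    exact mul_nonneg (hdom i).1 this.le
  have hNnp : N ≤ 0 := Finset.sum_nonpos fun i hi => by
    have := (Finset.mem_filter.mp hi).2
    exact mul_nonpos_of_nonneg_of_nonpos (hdom i).1 this.le
  have hPle : P ≤ Pb := Finset.sum_le_sum fun i hi => by
    have := (Finset.mem_filter.mp hi).2
    exact mul_le_mul_of_nonneg_right (hdom i).2 this.le
  have hNge : Nb ≤ N := Finset.sum_le_sum fun i hi => by
    have := (Finset.mem_filter.mp hi).2
    exact mul_le_mul_of_nonpos_right (hdom i).2 this.le
  have hsplit : ∑ i, x' i * y i = P + N := by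
    have hdisj : Disjoint Sp Sn := by
      rw [Finset.disjoint_filter]
      intro i _ h1 h2
      exact absurd h2 (not_lt_of_gt h1)
    rw [hP, hN, ← Finset.sum_union hdisj]
    rw [← Finset.sum_filter_add_sum_filter_not Finset.univ (fun i => y i = 0)
      (fun i => x' i * y i)]
    have h0 : ∑ i ∈ Finset.univ.filter (fun i => y i = 0), x' i * y i = 0 :=
      Finset.sum_eq_zero fun i hi => by
        have := (Finset.mem_filter.mp hi).2
        simp [this]
    rw [h0, zero_add]
    apply Finset.sum_congr _ (fun _ _ => rfl)
    ext i
    simp only [Finset.mem_filter, Finset.mem_union, Finset.mem_univ, true_and, hSp, hSn]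
    constructor
    · intro h; rcases lt_or_gt_of_ne h with h' | h'
      · exact Or.inr h'
      · exact Or.inl h'
    · rintro (h | h)
      · exact h.ne'
      · exact h.ne
  rw [hsplit]
  have hPb_abs : Pb ≤ |Pb| := le_abs_self _
  have hNb_abs : -Nb ≤ |Nb| := neg_le_abs _
  rw [abs_le]
  constructor
  · have h2 : -Nb ≤ max |Pb| |Nb| := le_trans hNb_abs (le_max_right _ _)
    linarith
  · calc P + N ≤ P := by linarith
      _ ≤ Pb := hPle
      _ ≤ |Pb| := hPb_abs
      _ ≤ max |Pb| |Nb| := le_max_left _ _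
end

section
/- Let a, b, c ∈ ℝ^n with a ≠ 0, and set d := c − ((a^⊤b)/‖a‖²) a. Let x_j, x_{j′} ∈ [0,1]^n with 0 ≤ x^i_{j′} ≤ x^i_j componentwise. Then (1/2)( x_{j′}^⊤ c + ‖x_{j′} − ((x_{j′}^⊤a)/‖a‖²)a‖₂ · ‖b − ((b^⊤a)/‖a‖²)a‖₂ − ((a^⊤b)/‖a‖₂)·((x_{j′}^⊤a)/‖a‖₂) ) ≤ (1/2)( Σ_{i: d_i>0} d_i x^i_j + ‖x_j‖₂ · ‖b − ((a^⊤b)/‖a‖²)a‖₂ ). -/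
open Finset

noncomputable def dotp {n : ℕ} (u v : Fin n → ℝ) : ℝ := ∑ i, u i * v i
noncomputable def nrm2 {n : ℕ} (u : Fin n → ℝ) : ℝ := Real.sqrt (∑ i, u i ^ 2)

lemma nrm2_nonneg {n : ℕ} (u : Fin n → ℝ) : 0 ≤ nrm2 u := Real.sqrt_nonneg _

lemma nrm2_mono {n : ℕ} {u v : Fin n → ℝ} (h : ∀ i, u i ^ 2 ≤ v i ^ 2) :
    nrm2 u ≤ nrm2 v :=
  Real.sqrt_le_sqrt (Finset.sum_le_sum fun i _ => h i)

/-- Safe feature pruning bound `P₂` (Theorem 1, `λ_{t-1} < λ_max`, 2nd branch). -/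
theorem stmt_9 {n : ℕ} (a b c : Fin n → ℝ) (ha : a ≠ 0)
    (d : Fin n → ℝ) (hd : d = fun i => c i - (dotp a b / nrm2 a ^ 2) * a i)
    (x x' : Fin n → ℝ)
    (hx : ∀ i, x i ∈ Set.Icc (0:ℝ) 1) (hx' : ∀ i, x' i ∈ Set.Icc (0:ℝ) 1)
    (hdom : ∀ i, 0 ≤ x' i ∧ x' i ≤ x i) :
    (1/2) * (dotp x' c
        + nrm2 (fun i => x' i - (dotp x' a / nrm2 a ^ 2) * a i)
          * nrm2 (fun i => b i - (dotp b a / nrm2 a ^ 2) * a i)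
        - (dotp a b / nrm2 a) * (dotp x' a / nrm2 a)) ≤
    (1/2) * ((∑ i ∈ Finset.univ.filter (fun i => 0 < d i), d i * x i)
        + nrm2 x * nrm2 (fun i => b i - (dotp a b / nrm2 a ^ 2) * a i)) := by
  -- positivity of ‖a‖
  obtain ⟨i₀, hi₀⟩ := Function.ne_iff.mp ha
  have hS : 0 < ∑ i, a i ^ 2 := by
    apply Finset.sum_pos' (fun i _ => sq_nonneg _)
    refine ⟨i₀, Finset.mem_univ _, ?_⟩
    have h : a i₀ ≠ 0 := hi₀
    positivity
  have hN : 0 < nrm2 a := Real.sqrt_pos.mpr hS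
  have hNsq : nrm2 a ^ 2 = ∑ i, a i ^ 2 := Real.sq_sqrt hS.le
  have hNne : nrm2 a ≠ 0 := hN.ne'
  -- commute dot product in the b-residual
  have hcomm : dotp b a = dotp a b := by simp [dotp, mul_comm]
  rw [hcomm]
  set B := nrm2 (fun i => b i - (dotp a b / nrm2 a ^ 2) * a i) with hB
  have hBnn : 0 ≤ B := nrm2_nonneg _
  -- linear part
  have hlin : dotp x' c - (dotp a b / nrm2 a) * (dotp x' a / nrm2 a)
      ≤ ∑ i ∈ Finset.univ.filter (fun i => 0 < d i), d i * x i := by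
    have h1 : dotp x' c - (dotp a b / nrm2 a) * (dotp x' a / nrm2 a)
        = ∑ i, x' i * d i := by
      have : (dotp a b / nrm2 a) * (dotp x' a / nrm2 a)
          = (dotp a b / nrm2 a ^ 2) * dotp x' a := by
        rw [div_mul_div_comm, ← sq]; ring
      rw [this, hd, dotp]
      rw [show dotp x' a = ∑ i, x' i * a i from rfl, Finset.mul_sum,
        ← Finset.sum_sub_distrib]
      exact Finset.sum_congr rfl fun i _ => by ring
    rw [h1, Finset.sum_filter]
    apply Finset.sum_le_sum
    intro i _
    by_cases h : 0 < d i
    · simp only [h, if_true]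
      rw [mul_comm]
      exact mul_le_mul_of_nonneg_left ((hdom i).2) h.le
    · simp only [h, if_false]
      push_neg at h
      exact mul_nonpos_of_nonneg_of_nonpos (hdom i).1 h
  -- norm part
  have hnorm : nrm2 (fun i => x' i - (dotp x' a / nrm2 a ^ 2) * a i) ≤ nrm2 x := by
    have h1 : nrm2 (fun i => x' i - (dotp x' a / nrm2 a ^ 2) * a i) ≤ nrm2 x' := by
      apply Real.sqrt_le_sqrt
      set t := dotp x' a / nrm2 a ^ 2 with ht
      have htS : t * (∑ i, a i ^ 2) = dotp x' a := by
        rw [ht, hNsq]; field_simp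
      have hexp : ∑ i, (x' i - t * a i) ^ 2
          = (∑ i, x' i ^ 2) - 2 * t * dotp x' a + t ^ 2 * ∑ i, a i ^ 2 := by
        rw [dotp, Finset.mul_sum, Finset.mul_sum, ← Finset.sum_sub_distrib,
          ← Finset.sum_add_distrib]
        exact Finset.sum_congr rfl fun i _ => by ring
      rw [hexp]
      have h2 : t ^ 2 * (∑ i, a i ^ 2) = t * dotp x' a := by
        rw [← htS]; ring
      rw [h2]
      have : 0 ≤ t * dotp x' a := by
        rw [ht, hNsq]
        rw [div_mul_eq_mul_div, ← sq]
        positivity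
      linarith
    have h2 : nrm2 x' ≤ nrm2 x := by
      apply nrm2_mono
      intro i
      have := hdom i
      nlinarith [this.1, this.2]
    exact h1.trans h2
  -- combine
  have hmul : nrm2 (fun i => x' i - (dotp x' a / nrm2 a ^ 2) * a i) * B
      ≤ nrm2 x * B := mul_le_mul_of_nonneg_right hnorm hBnn
  linarith
end

section
/- Let a, b, c ∈ ℝ^n with a ≠ 0, and set d := c − ((a^⊤b)/‖a‖²) a. Let x_j, x_{j′} ∈ [0,1]^n with 0 ≤ x^i_{j′} ≤ x^i_j componentwise. Then (1/2)( −x_{j′}^⊤ c + ‖x_{j′} − ((x_{j′}^⊤a)/‖a‖²)a‖₂ · ‖b − ((b^⊤a)/‖a‖²)a‖₂ + ((a^⊤b)/‖a‖₂)·((x_{j′}^⊤a)/‖a‖₂) ) ≤ (1/2)( −Σ_{i: d_i<0} d_i x^i_j + ‖x_j‖₂ · ‖b − ((a^⊤b)/‖a‖²)a‖₂ ). -/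
open Finset

lemma nrm2_sq {n : ℕ} (u : Fin n → ℝ) : nrm2 u ^ 2 = ∑ i, u i ^ 2 :=
  Real.sq_sqrt (Finset.sum_nonneg fun i _ => sq_nonneg _)

lemma dotp_comm {n : ℕ} (u v : Fin n → ℝ) : dotp u v = dotp v u :=
  Finset.sum_congr rfl fun i _ => mul_comm _ _

lemma proj_le {n : ℕ} (a u : Fin n → ℝ) (hS : 0 < ∑ i, a i ^ 2) :
    nrm2 (fun i => u i - (dotp u a / (∑ i, a i ^ 2)) * a i) ≤ nrm2 u := by
  set S := ∑ i, a i ^ 2 with hSdef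
  set t := dotp u a / S with htdef
  apply Real.sqrt_le_sqrt
  have expand : ∑ i, (u i - t * a i) ^ 2
      = (∑ i, u i ^ 2) - 2 * t * dotp u a + t ^ 2 * S := by
    rw [dotp, hSdef, Finset.mul_sum, Finset.mul_sum, ← Finset.sum_sub_distrib,
      ← Finset.sum_add_distrib]
    exact Finset.sum_congr rfl fun i _ => by ring
  rw [expand]
  have h1 : 2 * t * dotp u a - t ^ 2 * S = dotp u a ^ 2 / S := by
    rw [htdef]; field_simp; ring
  have h2 : 0 ≤ dotp u a ^ 2 / S := div_nonneg (sq_nonneg _) hS.le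
  linarith

/-- Safe feature pruning bound `M₂` (Theorem 1, `λ_{t-1} < λ_max`, 2nd branch of `u^-`). -/
theorem stmt_10 {n : ℕ} (a b c : Fin n → ℝ) (ha : a ≠ 0)
    (d : Fin n → ℝ) (hd : d = fun i => c i - (dotp a b / nrm2 a ^ 2) * a i)
    (x x' : Fin n → ℝ)
    (hx : ∀ i, x i ∈ Set.Icc (0:ℝ) 1) (hx' : ∀ i, x' i ∈ Set.Icc (0:ℝ) 1)
    (hdom : ∀ i, 0 ≤ x' i ∧ x' i ≤ x i) :
    (1/2) * (-(dotp x' c)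
        + nrm2 (fun i => x' i - (dotp x' a / nrm2 a ^ 2) * a i)
          * nrm2 (fun i => b i - (dotp b a / nrm2 a ^ 2) * a i)
        + (dotp a b / nrm2 a) * (dotp x' a / nrm2 a)) ≤
    (1/2) * (-(∑ i ∈ Finset.univ.filter (fun i => d i < 0), d i * x i)
        + nrm2 x * nrm2 (fun i => b i - (dotp a b / nrm2 a ^ 2) * a i)) := by
  obtain ⟨i0, hi0⟩ := Function.ne_iff.1 ha
  have hS : 0 < ∑ i, a i ^ 2 :=
    Finset.sum_pos' (fun i _ => sq_nonneg _)
      ⟨i0, Finset.mem_univ _, lt_of_le_of_ne (sq_nonneg _) (Ne.symm (pow_ne_zero 2 hi0))⟩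
  have hS2 : nrm2 a ^ 2 = ∑ i, a i ^ 2 := nrm2_sq a
  have hna : 0 < nrm2 a := by
    have := nrm2_nonneg a
    rcases this.lt_or_eq with h | h
    · exact h
    · exfalso; rw [← h] at hS2; simp at hS2; linarith [hS2 ▸ hS]
  -- first inequality: linear part
  have hdot : dotp x' d = dotp x' c - (dotp a b / nrm2 a ^ 2) * dotp x' a := by
    rw [hd]; simp only [dotp]
    rw [Finset.mul_sum, ← Finset.sum_sub_distrib]
    exact Finset.sum_congr rfl fun i _ => by ring
  have hA : ∑ i ∈ Finset.univ.filter (fun i => d i < 0), d i * x i ≤ dotp x' d := by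
    rw [Finset.sum_filter, dotp]
    apply Finset.sum_le_sum
    intro i _
    by_cases h : d i < 0
    · simp only [h, if_true]
      have := (hdom i).2
      nlinarith
    · simp only [h, if_false]
      have hd0 : 0 ≤ d i := not_lt.1 h
      exact mul_nonneg (hdom i).1 hd0
  -- second inequality: norm part
  have hPb : (fun i => b i - (dotp b a / nrm2 a ^ 2) * a i)
      = (fun i => b i - (dotp a b / nrm2 a ^ 2) * a i) := by
    rw [dotp_comm b a]
  have hB1 : nrm2 (fun i => x' i - (dotp x' a / nrm2 a ^ 2) * a i) ≤ nrm2 x' := by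
    rw [hS2]; exact proj_le a x' hS
  have hB2 : nrm2 x' ≤ nrm2 x :=
    nrm2_mono fun i => pow_le_pow_left₀ (hdom i).1 (hdom i).2 2
  have hB : nrm2 (fun i => x' i - (dotp x' a / nrm2 a ^ 2) * a i)
        * nrm2 (fun i => b i - (dotp b a / nrm2 a ^ 2) * a i)
      ≤ nrm2 x * nrm2 (fun i => b i - (dotp a b / nrm2 a ^ 2) * a i) := by
    rw [hPb]
    exact mul_le_mul_of_nonneg_right (hB1.trans hB2) (nrm2_nonneg _)
  have hterm : (dotp a b / nrm2 a) * (dotp x' a / nrm2 a)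
      = (dotp a b / nrm2 a ^ 2) * dotp x' a := by
    rw [div_mul_div_comm, ← sq, div_mul_eq_mul_div]
  rw [hterm]
  linarith [hdot ▸ hA]
end

section
/- Let F = {θ ∈ ℝ^n : |x_j^⊤θ| ≤ 1 for all j ∈ [D]} and let θ* be the Euclidean projection of y/λ onto F. If θ* satisfies |x_j^⊤θ*| < 1 for some j, and β* is a LASSO solution at parameter λ with θ* = (y − Xβ*)/λ, then β*_j = 0 and removing column j from X does not change the set of LASSO solutions: argmin_β (1/2)‖y − Xβ‖² + λ‖β‖₁ restricted to β_j = 0 has the same optimal value and β* remains optimal. -/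
open Finset

/-- If the dual optimum (projection of `y/λ` onto the dual feasible polytope)
satisfies `|x_j^⊤θ*| < 1`, then `β*_j = 0` and `β*` remains optimal among
vectors with `j`-th coefficient zero (removing column `j` does not change the
solutions). -/
theorem stmt_19 {n D : ℕ} (X : Matrix (Fin n) (Fin D) ℝ) (y : Fin n → ℝ)
    (lam : ℝ) (hlam : 0 < lam) (θs : Fin n → ℝ)
    (hθfeas : ∀ j : Fin D, |∑ i, X i j * θs i| ≤ 1)
    (hθproj : ∀ θ : Fin n → ℝ, (∀ j : Fin D, |∑ i, X i j * θ i| ≤ 1) →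
      ∑ i, (θs i - y i / lam) ^ 2 ≤ ∑ i, (θ i - y i / lam) ^ 2)
    (βs : Fin D → ℝ)
    (hβopt : ∀ β : Fin D → ℝ, lassoObj X y lam βs ≤ lassoObj X y lam β)
    (hlink : θs = fun i => (y i - ∑ j, X i j * βs j) / lam)
    (j : Fin D) (hj : |∑ i, X i j * θs i| < 1) :
    βs j = 0 ∧
    (∀ β : Fin D → ℝ, β j = 0 → lassoObj X y lam βs ≤ lassoObj X y lam β) := by
  refine ⟨?_, fun β _ => hβopt β⟩
  by_contra hne
  set a : ℝ := |βs j| with hadef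
  have ha : 0 < a := abs_pos.mpr hne
  set s : ℝ := if 0 < βs j then 1 else -1 with hs
  have hsb : s * βs j = a := by
    rcases lt_trichotomy (βs j) 0 with h | h | h
    · simp [hs, not_lt.mpr h.le, hadef, abs_of_neg h]
    · exact absurd h hne
    · simp [hs, h, hadef, abs_of_pos h]
  have hs2 : s * s = 1 := by
    rcases lt_or_ge 0 (βs j) with h | h
    · simp [hs, h]
    · simp [hs, not_lt.mpr h]
  have habs_s : |s| = 1 := by
    rcases lt_or_ge 0 (βs j) with h | h
    · simp [hs, h]
    · simp [hs, not_lt.mpr h]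
  set Q : ℝ := ∑ i, (X i j) ^ 2 with hQdef
  have hQ : 0 ≤ Q := Finset.sum_nonneg fun i _ => sq_nonneg _
  set c : ℝ := ∑ i, X i j * θs i with hcdef
  have hcr : ∑ i, (y i - ∑ j', X i j' * βs j') * X i j = lam * c := by
    rw [hcdef, hlink, Finset.mul_sum]
    refine Finset.sum_congr rfl fun i _ => ?_
    field_simp
  have habsc : |c| < 1 := hj
  have hsc : s * c < 1 := by
    calc s * c ≤ |s * c| := le_abs_self _
      _ = |c| := by rw [abs_mul, habs_s, one_mul]
      _ < 1 := habsc
  set η : ℝ := lam * (1 - s * c) with hη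
  have hηpos : 0 < η := mul_pos hlam (by linarith)
  set t : ℝ := min a (η / (Q + 1)) with ht
  have htpos : 0 < t := lt_min ha (div_pos hηpos (by linarith))
  have hta : t ≤ a := min_le_left _ _
  have htQ1 : t * (Q + 1) ≤ η := (le_div_iff₀ (by linarith)).mp (min_le_right _ _)
  have htQ : t * Q < η := by nlinarith
  set β' : Fin D → ℝ := fun j' => βs j' - if j' = j then s * t else 0 with hβ'
  have hinner : ∀ i, ∑ j', X i j' * β' j'
      = (∑ j', X i j' * βs j') - X i j * (s * t) := by
    intro i
    simp only [hβ', mul_sub, Finset.sum_sub_distrib, mul_ite, mul_zero,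
      Finset.sum_ite_eq', Finset.mem_univ, if_true]
  have hsq : ∑ i, (y i - ∑ j', X i j' * β' j') ^ 2
      = (∑ i, (y i - ∑ j', X i j' * βs j') ^ 2)
        + 2 * s * t * (lam * c) + t ^ 2 * (s * s) * Q := by
    have hterm : ∀ i : Fin n, (y i - ∑ j', X i j' * β' j') ^ 2
        = (y i - ∑ j', X i j' * βs j') ^ 2
          + 2 * s * t * ((y i - ∑ j', X i j' * βs j') * X i j)
          + t ^ 2 * (s * s) * (X i j) ^ 2 := by
      intro i; rw [hinner i]; ring
    rw [Finset.sum_congr rfl fun i _ => hterm i, Finset.sum_add_distrib,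
      Finset.sum_add_distrib, ← Finset.mul_sum, ← Finset.mul_sum, hcr, hQdef]
  have habsj : |βs j - s * t| = a - t := by
    have h1 : s * (βs j - s * t) = a - t := by
      calc s * (βs j - s * t) = s * βs j - (s * s) * t := by ring
        _ = a - t := by rw [hsb, hs2, one_mul]
    have h2 : |βs j - s * t| = |s * (βs j - s * t)| := by
      rw [abs_mul, habs_s, one_mul]
    rw [h2, h1, abs_of_nonneg (by linarith)]
  have habs : ∑ j', |β' j'| = (∑ j', |βs j'|) - t := by
    rw [← Finset.add_sum_erase _ (fun j' => |β' j'|) (Finset.mem_univ j),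
        ← Finset.add_sum_erase _ (fun j' => |βs j'|) (Finset.mem_univ j)]
    have h1 : |β' j| = a - t := by simp only [hβ', if_pos rfl]; exact habsj
    have h2 : ∑ j' ∈ Finset.univ.erase j, |β' j'|
        = ∑ j' ∈ Finset.univ.erase j, |βs j'| := by
      refine Finset.sum_congr rfl fun j' hj' => ?_
      have : j' ≠ j := (Finset.mem_erase.mp hj').1
      simp [hβ', this]
    rw [h1, h2, ← hadef]
    ring
  have hkey : lassoObj X y lam β' = lassoObj X y lam βs + (t ^ 2 * Q / 2 - t * η) := by
    unfold lassoObj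
    rw [hsq, habs, hs2, hη]
    ring
  have h0 := hβopt β'
  rw [hkey] at h0
  have hneg : t ^ 2 * Q / 2 - t * η < 0 := by nlinarith
  linarith
end
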